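/- Let (Rₙ) be a continuous fully matricial H-valued function on an open fully matricial G-set (Ωₙ). Let g' ∈ Ω_m, g'' ∈ Ωₙ, γ ∈ M_{m,n}(G), assume [[g', λγ],[0, g'']] ∈ Ω_{m+n} for all λ ∈ ℂ. Then there exists h ∈ M_{m,n}(H) such that R_{m+n}([[g', λγ],[0, g'']]) = [[R_m(g'), λh],[0, Rₙ(g'')]] for all λ ∈ ℂ. -/
import Mathlib

noncomputable section

/-- Left multiplication of a vector-valued matrix by a scalar matrix. -/
def cmul {G : Type*} [AddCommGroup G] [Module ℂ G] {ι : Type*} [Fintype ι]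
    (S : Matrix ι ι ℂ) (g : Matrix ι ι G) : Matrix ι ι G :=
  Matrix.of fun i j => ∑ k, S i k • g k j

/-- Right multiplication of a vector-valued matrix by a scalar matrix. -/
def mulc {G : Type*} [AddCommGroup G] [Module ℂ G] {ι : Type*} [Fintype ι]
    (g : Matrix ι ι G) (S : Matrix ι ι ℂ) : Matrix ι ι G :=
  Matrix.of fun i j => ∑ k, S k j • g i k

open Matrix

section helpers

variable {G : Type*} [AddCommGroup G] [Module ℂ G]

lemma cmul_reindex {ι κ : Type*} [Fintype ι] [Fintype κ]
    (e : ι ≃ κ) (S : Matrix ι ι ℂ) (g : Matrix ι ι G) :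
    cmul (reindex e e S) (reindex e e g) = reindex e e (cmul S g) := by
  ext i j
  simp only [cmul, reindex_apply, submatrix_apply, of_apply]
  exact Fintype.sum_equiv e.symm _ _ fun k => rfl

lemma mulc_reindex {ι κ : Type*} [Fintype ι] [Fintype κ]
    (e : ι ≃ κ) (g : Matrix ι ι G) (S : Matrix ι ι ℂ) :
    mulc (reindex e e g) (reindex e e S) = reindex e e (mulc g S) := by
  ext i j
  simp only [mulc, reindex_apply, submatrix_apply, of_apply]
  exact Fintype.sum_equiv e.symm _ _ fun k => rfl

lemma cmul_diag_fromBlocks {m n : Type*} [Fintype m] [Fintype n] [DecidableEq m] [DecidableEq n]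
    (ε : ℂ) (a : Matrix m m G) (b : Matrix m n G) (c : Matrix n m G) (d : Matrix n n G) :
    cmul (fromBlocks (ε • (1 : Matrix m m ℂ)) 0 0 (1 : Matrix n n ℂ)) (fromBlocks a b c d)
      = fromBlocks (ε • a) (ε • b) c d := by
  ext i j
  rcases i with i | i <;> rcases j with j | j <;>
    simp [cmul, Fintype.sum_sum_type, Matrix.one_apply, mul_ite, ite_smul, smul_smul,
      Finset.sum_ite_eq, Finset.sum_ite_eq']

lemma mulc_diag_fromBlocks {m n : Type*} [Fintype m] [Fintype n] [DecidableEq m] [DecidableEq n]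
    (δ : ℂ) (a : Matrix m m G) (b : Matrix m n G) (c : Matrix n m G) (d : Matrix n n G) :
    mulc (fromBlocks a b c d) (fromBlocks (δ • (1 : Matrix m m ℂ)) 0 0 (1 : Matrix n n ℂ))
      = fromBlocks (δ • a) b (δ • c) d := by
  ext i j
  rcases i with i | i <;> rcases j with j | j <;>
    simp [mulc, Fintype.sum_sum_type, Matrix.one_apply, mul_ite, ite_smul, smul_smul,
      Finset.sum_ite_eq, Finset.sum_ite_eq']

end helpers

theorem stmt13 {G H : Type*} [NormedAddCommGroup G] [NormedSpace ℂ G] [CompleteSpace G]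
    [NormedAddCommGroup H] [NormedSpace ℂ H] [CompleteSpace H]
    (Ω : (n : ℕ) → Set (Matrix (Fin n) (Fin n) G))
    (R : (n : ℕ) → Matrix (Fin n) (Fin n) G → Matrix (Fin n) (Fin n) H)
    -- (Ωₙ) is an open fully matricial G-set
    (hopen : ∀ n, 1 ≤ n → IsOpen (Ω n))
    (hFMS2 : ∀ (m n : ℕ), 1 ≤ m → 1 ≤ n →
      ∀ (g' : Matrix (Fin m) (Fin m) G) (g'' : Matrix (Fin n) (Fin n) G),
      (Matrix.reindex finSumFinEquiv finSumFinEquiv (Matrix.fromBlocks g' 0 0 g'')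
          ∈ Ω (m + n)) ↔ (g' ∈ Ω m ∧ g'' ∈ Ω n))
    (hFMS3 : ∀ (n : ℕ), 1 ≤ n → ∀ (S : GL (Fin n) ℂ) (g : Matrix (Fin n) (Fin n) G),
      g ∈ Ω n → cmul (S : Matrix (Fin n) (Fin n) ℂ)
        (mulc g (↑S⁻¹ : Matrix (Fin n) (Fin n) ℂ)) ∈ Ω n)
    -- (Rₙ) is a continuous fully matricial H-valued function on (Ωₙ)
    (hcont : ∀ n, 1 ≤ n → ContinuousOn (R n) (Ω n))
    -- (FMF2)
    (hFMF2 : ∀ (m n : ℕ), 1 ≤ m → 1 ≤ n →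
      ∀ (g' : Matrix (Fin m) (Fin m) G) (g'' : Matrix (Fin n) (Fin n) G),
      g' ∈ Ω m → g'' ∈ Ω n →
      R (m + n) (Matrix.reindex finSumFinEquiv finSumFinEquiv
          (Matrix.fromBlocks g' 0 0 g'')) =
        Matrix.reindex finSumFinEquiv finSumFinEquiv
          (Matrix.fromBlocks (R m g') 0 0 (R n g'')))
    -- (FMF3)
    (hFMF3 : ∀ (n : ℕ), 1 ≤ n → ∀ (S : GL (Fin n) ℂ) (g : Matrix (Fin n) (Fin n) G),
      g ∈ Ω n →
      R n (cmul (S : Matrix (Fin n) (Fin n) ℂ)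
          (mulc g (↑S⁻¹ : Matrix (Fin n) (Fin n) ℂ))) =
        cmul (S : Matrix (Fin n) (Fin n) ℂ)
          (mulc (R n g) (↑S⁻¹ : Matrix (Fin n) (Fin n) ℂ))) :
    ∀ (m n : ℕ), 1 ≤ m → 1 ≤ n →
    ∀ (g' : Matrix (Fin m) (Fin m) G) (g'' : Matrix (Fin n) (Fin n) G)
      (γ : Matrix (Fin m) (Fin n) G),
    g' ∈ Ω m → g'' ∈ Ω n →
    (∀ lam : ℂ, Matrix.reindex finSumFinEquiv finSumFinEquiv
        (Matrix.fromBlocks g' (lam • γ) 0 g'') ∈ Ω (m + n)) →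
    ∃ h : Matrix (Fin m) (Fin n) H, ∀ lam : ℂ,
      R (m + n) (Matrix.reindex finSumFinEquiv finSumFinEquiv
          (Matrix.fromBlocks g' (lam • γ) 0 g'')) =
        Matrix.reindex finSumFinEquiv finSumFinEquiv
          (Matrix.fromBlocks (R m g') (lam • h) 0 (R n g'')) := by
  intro m n hm hn g' g'' γ hg' hg'' hΩ
  have hmn : 1 ≤ m + n := le_trans hm (Nat.le_add_right m n)
  classical
  set e : Fin m ⊕ Fin n ≃ Fin (m + n) := finSumFinEquiv with he
  set gm : ℂ → Matrix (Fin (m + n)) (Fin (m + n)) G := fun lam =>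
    Matrix.reindex e e (Matrix.fromBlocks g' (lam • γ) 0 g'') with hgm
  have hΩ' : ∀ lam : ℂ, gm lam ∈ Ω (m + n) := fun lam => hΩ lam
  set Fb : ℂ → Matrix (Fin m ⊕ Fin n) (Fin m ⊕ Fin n) H := fun lam =>
    (Matrix.reindex e e).symm (R (m + n) (gm lam)) with hFb
  -- the full value as a reindexed block matrix
  have hX : ∀ lam : ℂ, R (m + n) (gm lam) =
      Matrix.reindex e e (Matrix.fromBlocks (Fb lam).toBlocks₁₁ (Fb lam).toBlocks₁₂
        (Fb lam).toBlocks₂₁ (Fb lam).toBlocks₂₂) := by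
    intro lam
    rw [Matrix.fromBlocks_toBlocks]
    simp only [hFb]
    exact (Equiv.apply_symm_apply _ _).symm
  -- invertibility of the scaling matrices
  have hSmul : ∀ (ε : ℂ), ε ≠ 0 →
      (Matrix.reindex e e (Matrix.fromBlocks (ε • (1 : Matrix (Fin m) (Fin m) ℂ)) 0 0
        (1 : Matrix (Fin n) (Fin n) ℂ))) *
      (Matrix.reindex e e (Matrix.fromBlocks (ε⁻¹ • (1 : Matrix (Fin m) (Fin m) ℂ)) 0 0
        (1 : Matrix (Fin n) (Fin n) ℂ))) = 1 := by
    intro ε hε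
    rw [Matrix.reindex_apply, Matrix.reindex_apply, Matrix.submatrix_mul_equiv,
      Matrix.fromBlocks_multiply]
    simp [Matrix.smul_mul, Matrix.mul_smul, smul_smul, mul_inv_cancel₀ hε,
      inv_mul_cancel₀ hε, Matrix.fromBlocks_one, Matrix.submatrix_one_equiv]
  -- the key conjugation relation
  have key : ∀ (ε : ℂ), ε ≠ 0 → ∀ lam : ℂ,
      Fb (ε * lam) = Matrix.fromBlocks ((Fb lam).toBlocks₁₁) (ε • (Fb lam).toBlocks₁₂)
        (ε⁻¹ • (Fb lam).toBlocks₂₁) ((Fb lam).toBlocks₂₂) := by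
    intro ε hε lam
    set S : GL (Fin (m + n)) ℂ :=
      ⟨Matrix.reindex e e (Matrix.fromBlocks (ε • 1) 0 0 1),
       Matrix.reindex e e (Matrix.fromBlocks (ε⁻¹ • 1) 0 0 1),
       hSmul ε hε, by
         have := hSmul ε⁻¹ (inv_ne_zero hε)
         rwa [inv_inv] at this⟩ with hS
    have h1 := hFMF3 (m + n) hmn S (gm lam) (hΩ' lam)
    have hSv : (↑S : Matrix (Fin (m + n)) (Fin (m + n)) ℂ) =
        Matrix.reindex e e (Matrix.fromBlocks (ε • 1) 0 0 1) := rfl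
    have hSi : (↑S⁻¹ : Matrix (Fin (m + n)) (Fin (m + n)) ℂ) =
        Matrix.reindex e e (Matrix.fromBlocks (ε⁻¹ • 1) 0 0 1) := rfl
    rw [hSv, hSi] at h1
    have hconj : cmul (Matrix.reindex e e (Matrix.fromBlocks (ε • 1) 0 0 1))
        (mulc (gm lam) (Matrix.reindex e e (Matrix.fromBlocks (ε⁻¹ • 1) 0 0 1))) =
        gm (ε * lam) := by
      simp only [hgm]
      rw [mulc_reindex, cmul_reindex, mulc_diag_fromBlocks, cmul_diag_fromBlocks]
      simp [smul_smul, mul_inv_cancel₀ hε, smul_zero]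
    rw [hconj] at h1
    simp only [hFb]
    rw [h1, hX lam, mulc_reindex, cmul_reindex, mulc_diag_fromBlocks, cmul_diag_fromBlocks,
      Equiv.symm_apply_apply]
    simp [smul_smul, mul_inv_cancel₀ hε]
  -- continuity
  have hgmcont : Continuous gm := by
    simp only [hgm]
    apply continuous_pi; intro i; apply continuous_pi; intro j
    simp only [Matrix.reindex_apply, Matrix.submatrix_apply]
    rcases e.symm i with a | a <;> rcases e.symm j with b | b
    · exact continuous_const
    · simp only [Matrix.fromBlocks_apply₁₂, Matrix.smul_apply]
      exact continuous_id.smul continuous_const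
    · exact continuous_const
    · exact continuous_const
  have hRcont : Continuous fun lam => R (m + n) (gm lam) :=
    (hcont (m + n) hmn).comp_continuous hgmcont hΩ'
  have hFbcont : ∀ u v, Continuous fun lam : ℂ => Fb lam u v := by
    intro u v
    exact (continuous_apply (e v)).comp ((continuous_apply (e u)).comp hRcont)
  have hAcont : Continuous fun lam : ℂ => (Fb lam).toBlocks₁₁ :=
    continuous_pi fun i => continuous_pi fun j => hFbcont (Sum.inl i) (Sum.inl j)
  have hCcont : Continuous fun lam : ℂ => (Fb lam).toBlocks₂₁ :=
    continuous_pi fun i => continuous_pi fun j => hFbcont (Sum.inr i) (Sum.inl j)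
  have hDcont : Continuous fun lam : ℂ => (Fb lam).toBlocks₂₂ :=
    continuous_pi fun i => continuous_pi fun j => hFbcont (Sum.inr i) (Sum.inr j)
  -- value at 0
  have hFb0 : Fb 0 = Matrix.fromBlocks (R m g') 0 0 (R n g'') := by
    have hg0 : gm 0 = Matrix.reindex e e (Matrix.fromBlocks g' 0 0 g'') := by
      simp [hgm]
    have h2 := hFMF2 m n hm hn g' g'' hg' hg''
    rw [← he] at h2
    simp only [hFb, hg0, h2]
    exact Equiv.symm_apply_apply _ _
  -- limit arguments
  have hA1 : (Fb 1).toBlocks₁₁ = (Fb 0).toBlocks₁₁ := by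
    have h1 : Filter.Tendsto (fun ε : ℂ => (Fb ε).toBlocks₁₁) (nhdsWithin 0 {(0 : ℂ)}ᶜ)
        (nhds ((Fb 0).toBlocks₁₁)) := (hAcont.tendsto 0).mono_left nhdsWithin_le_nhds
    have h2 : Filter.Tendsto (fun ε : ℂ => (Fb ε).toBlocks₁₁) (nhdsWithin 0 {(0 : ℂ)}ᶜ)
        (nhds ((Fb 1).toBlocks₁₁)) := by
      have heq : (fun _ : ℂ => (Fb 1).toBlocks₁₁) =ᶠ[nhdsWithin 0 {(0 : ℂ)}ᶜ]
          fun ε => (Fb ε).toBlocks₁₁ := by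
        filter_upwards [self_mem_nhdsWithin] with ε hε
        have hk := key ε hε 1
        rw [mul_one] at hk
        rw [hk, Matrix.toBlocks_fromBlocks₁₁]
      exact tendsto_const_nhds.congr' heq
    exact tendsto_nhds_unique h2 h1
  have hD1 : (Fb 1).toBlocks₂₂ = (Fb 0).toBlocks₂₂ := by
    have h1 : Filter.Tendsto (fun ε : ℂ => (Fb ε).toBlocks₂₂) (nhdsWithin 0 {(0 : ℂ)}ᶜ)
        (nhds ((Fb 0).toBlocks₂₂)) := (hDcont.tendsto 0).mono_left nhdsWithin_le_nhds
    have h2 : Filter.Tendsto (fun ε : ℂ => (Fb ε).toBlocks₂₂) (nhdsWithin 0 {(0 : ℂ)}ᶜ)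
        (nhds ((Fb 1).toBlocks₂₂)) := by
      have heq : (fun _ : ℂ => (Fb 1).toBlocks₂₂) =ᶠ[nhdsWithin 0 {(0 : ℂ)}ᶜ]
          fun ε => (Fb ε).toBlocks₂₂ := by
        filter_upwards [self_mem_nhdsWithin] with ε hε
        have hk := key ε hε 1
        rw [mul_one] at hk
        rw [hk, Matrix.toBlocks_fromBlocks₂₂]
      exact tendsto_const_nhds.congr' heq
    exact tendsto_nhds_unique h2 h1
  have hC1 : (Fb 1).toBlocks₂₁ = 0 := by
    have h1 : Filter.Tendsto (fun ε : ℂ => ε • (Fb ε).toBlocks₂₁) (nhdsWithin 0 {(0 : ℂ)}ᶜ)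
        (nhds ((0 : ℂ) • (Fb 0).toBlocks₂₁)) :=
      ((continuous_id.smul hCcont).tendsto 0).mono_left nhdsWithin_le_nhds
    rw [zero_smul] at h1
    have h2 : Filter.Tendsto (fun ε : ℂ => ε • (Fb ε).toBlocks₂₁) (nhdsWithin 0 {(0 : ℂ)}ᶜ)
        (nhds ((Fb 1).toBlocks₂₁)) := by
      have heq : (fun _ : ℂ => (Fb 1).toBlocks₂₁) =ᶠ[nhdsWithin 0 {(0 : ℂ)}ᶜ]
          fun ε => ε • (Fb ε).toBlocks₂₁ := by
        filter_upwards [self_mem_nhdsWithin] with ε hε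
        have hk := key ε hε 1
        rw [mul_one] at hk
        rw [hk, Matrix.toBlocks_fromBlocks₂₁, smul_smul, mul_inv_cancel₀ hε, one_smul]
      exact tendsto_const_nhds.congr' heq
    exact tendsto_nhds_unique h2 h1
  -- conclusion
  refine ⟨(Fb 1).toBlocks₁₂, fun lam => ?_⟩
  have goal' : Fb lam = Matrix.fromBlocks (R m g') (lam • (Fb 1).toBlocks₁₂) 0 (R n g'') := by
    rcases eq_or_ne lam 0 with rfl | hlam
    · rw [hFb0, zero_smul]
    · have hk := key lam hlam 1
      rw [mul_one] at hk
      rw [hk, hA1, hD1, hC1, smul_zero, hFb0, Matrix.toBlocks_fromBlocks₁₁,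
        Matrix.toBlocks_fromBlocks₂₂]
  have : R (m + n) (gm lam) = Matrix.reindex e e
      (Matrix.fromBlocks (R m g') (lam • (Fb 1).toBlocks₁₂) 0 (R n g'')) := by
    rw [← goal']
    simp only [hFb]
    exact (Equiv.apply_symm_apply _ _).symm
  exact this
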